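/- arXiv:1811.05727 — 2 statements merged into one kernel-verified Lean document; each statement's English description precedes it below -/
import Mathlib

section
/- Let M be a nonzero subrectangular nonnegative real matrix and T a nonnegative real matrix of compatible dimensions such that T·M is nonzero. Then φ(T·M) ≥ φ(M), and consequently τ(T·M) ≤ τ(M). If, in addition, T is itself nonzero and subrectangular, then for all strictly positive vectors x, y one has d(xᵀ·T·M, yᵀ·T·M) ≤ τ(T)·τ(M)·d(x, y). -/
/-- A nonnegative matrix is *subrectangular* if `M i j ≠ 0` and `M k l ≠ 0` imply
`M i l ≠ 0` and `M k j ≠ 0`. -/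
def Subrectangular {m n : Type*} (M : Matrix m n ℝ) : Prop :=
  ∀ i j k l, M i j ≠ 0 → M k l ≠ 0 → M i l ≠ 0 ∧ M k j ≠ 0

/-- The projective distance `d(x,y) = ln max_{j,l ∈ supp x} (x_j/y_j)/(x_l/y_l)`, with the
convention that `d = 0` when the support is empty (`sSup ∅ = 0` and `log 0 = 0`). -/
noncomputable def projDist {n : Type*} (x y : n → ℝ) : ℝ :=
  Real.log (sSup {r : ℝ | ∃ j, x j ≠ 0 ∧ ∃ l, x l ≠ 0 ∧ r = (x j / y j) / (x l / y l)})

/-- `φ(M)`: minimum of `(M i j · M k l)/(M i l · M k j)` over nonzero rows `i, k` and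
nonzero columns `j, l` of `M`. -/
noncomputable def phi {m n : Type*} (M : Matrix m n ℝ) : ℝ :=
  sInf {r : ℝ | ∃ i k j l,
    (∃ j', M i j' ≠ 0) ∧ (∃ j', M k j' ≠ 0) ∧ (∃ i', M i' j ≠ 0) ∧ (∃ i', M i' l ≠ 0) ∧
    r = (M i j * M k l) / (M i l * M k j)}

/-- The Birkhoff contraction coefficient `τ(M) = (1 − √φ(M))/(1 + √φ(M))`. -/
noncomputable def tau {m n : Type*} (M : Matrix m n ℝ) : ℝ :=
  (1 - Real.sqrt (phi M)) / (1 + Real.sqrt (phi M))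

open Real Finset
set_option linter.unusedSectionVars false

section analytic
open Set

lemma log_ineq {F B : ℝ} (hF0 : 0 < F) (hF1 : F ≤ 1) (hB : 1 ≤ B) :
    Real.log ((B + F) / (1 + B * F)) ≤ (1 - F) / (1 + F) * Real.log B := by
  have hF1' : 0 < 1 + F := by linarith
  set c : ℝ := (1 - F) / (1 + F) with hc
  set h : ℝ → ℝ := fun b => c * Real.log b - Real.log (b + F) + Real.log (1 + b * F) with hh
  set h' : ℝ → ℝ := fun b => c * b⁻¹ - 1 / (b + F) + F / (1 + b * F) with hh'
  have hd : ∀ x ∈ Set.Ioi (0:ℝ), HasDerivAt h (h' x) x := by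
    intro x hx
    have hx0 : (0:ℝ) < x := hx
    have h1 : HasDerivAt (fun b : ℝ => c * Real.log b) (c * x⁻¹) x :=
      (Real.hasDerivAt_log hx0.ne').const_mul c
    have h2 : HasDerivAt (fun b : ℝ => Real.log (b + F)) (1 / (x + F)) x := by
      have : HasDerivAt (fun b : ℝ => b + F) 1 x := (hasDerivAt_id x).add_const F
      simpa using this.log (by positivity)
    have h3 : HasDerivAt (fun b : ℝ => Real.log (1 + b * F)) (F / (1 + x * F)) x := by
      have : HasDerivAt (fun b : ℝ => 1 + b * F) F x := by
        simpa using ((hasDerivAt_id x).mul_const F).const_add 1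
      simpa using this.log (by positivity)
    exact (h1.sub h2).add h3
  have hmono : MonotoneOn h (Set.Ici 1) := by
    apply monotoneOn_of_hasDerivWithinAt_nonneg (convex_Ici 1)
    · apply ContinuousOn.mono _ (Set.Ici_subset_Ioi.mpr (by norm_num) : Set.Ici (1:ℝ) ⊆ Set.Ioi 0)
      intro x hx
      exact ((hd x hx).continuousAt).continuousWithinAt
    · intro x hx
      rw [interior_Ici] at hx
      exact ((hd x (by simp at hx ⊢; linarith : x ∈ Set.Ioi (0:ℝ)))).hasDerivWithinAt
    · intro x hx
      rw [interior_Ici] at hx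
      have hx1 : (1:ℝ) < x := hx
      have hx0 : (0:ℝ) < x := by linarith
      have key : h' x = F * (1 - F) * (x - 1)^2 / ((1 + F) * (x * ((x + F) * (1 + x * F)))) := by
        rw [hh', hc]
        field_simp
        ring
      rw [key]
      have : 0 ≤ F * (1 - F) * (x - 1)^2 := mul_nonneg (mul_nonneg hF0.le (by linarith)) (sq_nonneg _)
      apply div_nonneg this
      have : 0 < x + F := by linarith
      positivity
  have h1 : h 1 = 0 := by simp [hh]
  have hBh : 0 ≤ h B := by
    have := hmono (Set.self_mem_Ici) (Set.mem_Ici.2 hB) hB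
    rw [h1] at this; exact this
  have hBF : 0 < B + F := by linarith
  have hBF2 : 0 < 1 + B * F := by nlinarith
  rw [Real.log_div (ne_of_gt hBF) (ne_of_gt hBF2)]
  simp only [hh] at hBh
  linarith

lemma key_alg {B F P1 Q1 P2 Q2 : ℝ} (hB : 1 ≤ B) (hF0 : 0 < F) (hF1 : F ≤ 1)
    (hP1 : 0 ≤ P1) (hQ1 : 0 ≤ Q1) (hP2 : 0 ≤ P2) (hQ2 : 0 ≤ Q2)
    (hcon : F ^ 2 * (Q1 * P2) ≤ P1 * Q2) :
    (P1 + B ^ 2 * Q1) * (P2 + Q2) * (1 + B * F) ^ 2 ≤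
      (B + F) ^ 2 * ((P1 + Q1) * (P2 + B ^ 2 * Q2)) := by
  have hB2 : 1 ≤ B ^ 2 := by nlinarith
  have hF2 : F ^ 2 ≤ 1 := by nlinarith
  have hΔ : 0 ≤ (B ^ 2 - 1) * (1 - F ^ 2) := mul_nonneg (by linarith) (by linarith)
  have hsq : (1 + B * F) ^ 2 ≤ (B + F) ^ 2 := by nlinarith [hΔ]
  rcases eq_or_lt_of_le hP1 with h0 | hP1pos
  · -- P1 = 0
    have hPQ : P1 * Q2 = 0 := by rw [← h0]; ring
    have hQP : Q1 * P2 = 0 := by nlinarith [pow_pos hF0 2, mul_nonneg hQ1 hP2]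
    rcases mul_eq_zero.mp hQP with h | h
    · rw [← h0, h]; norm_num
    · rw [← h0, h]; norm_num
      nlinarith [mul_nonneg hQ1 hQ2, mul_nonneg (mul_nonneg hQ1 hQ2) (sub_nonneg.2 hsq),
        mul_nonneg (mul_nonneg (mul_nonneg hQ1 hQ2) (sub_nonneg.2 hsq)) (by positivity : (0:ℝ) ≤ B ^ 2)]
  · have hE : 0 ≤ P1 * Q2 - F ^ 2 * (Q1 * P2) := by linarith
    have c1 : 0 ≤ B ^ 2 * (B + F) ^ 2 - (1 + B * F) ^ 2 := by
      nlinarith [mul_nonneg (sub_nonneg.2 hB2) (sq_nonneg (B + F))]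
    have c2 : 0 ≤ B ^ 2 * ((B + F) ^ 2 - (1 + B * F) ^ 2) :=
      mul_nonneg (by positivity) (sub_nonneg.2 hsq)
    have hBr : 0 ≤ B ^ 2 * (B + F) ^ 2 * (P1 + Q1) - (1 + B * F) ^ 2 * (P1 + B ^ 2 * Q1) := by
      nlinarith [mul_nonneg hP1 c1, mul_nonneg hQ1 c2]
    have hid : P1 * ((B + F) ^ 2 * ((P1 + Q1) * (P2 + B ^ 2 * Q2)) -
        (P1 + B ^ 2 * Q1) * (P2 + Q2) * (1 + B * F) ^ 2) =
        P2 * ((B ^ 2 - 1) * (1 - F ^ 2)) * (P1 - B * F * Q1) ^ 2 +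
        (P1 * Q2 - F ^ 2 * (Q1 * P2)) *
          (B ^ 2 * (B + F) ^ 2 * (P1 + Q1) - (1 + B * F) ^ 2 * (P1 + B ^ 2 * Q1)) := by
      ring
    have hnn : 0 ≤ P1 * ((B + F) ^ 2 * ((P1 + Q1) * (P2 + B ^ 2 * Q2)) -
        (P1 + B ^ 2 * Q1) * (P2 + Q2) * (1 + B * F) ^ 2) := by
      rw [hid]
      have t1 : 0 ≤ P2 * ((B ^ 2 - 1) * (1 - F ^ 2)) * (P1 - B * F * Q1) ^ 2 :=
        mul_nonneg (mul_nonneg hP2 hΔ) (sq_nonneg _)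
      have t2 := mul_nonneg hE hBr
      linarith
    nlinarith [hnn, hP1pos]

end analytic

section helpers

variable {m n : Type*} [Fintype m] [Fintype n]

/-- The defining set of `phi`. -/
def phiSet (A : Matrix m n ℝ) : Set ℝ :=
  {r : ℝ | ∃ i k j l,
    (∃ j', A i j' ≠ 0) ∧ (∃ j', A k j' ≠ 0) ∧ (∃ i', A i' j ≠ 0) ∧ (∃ i', A i' l ≠ 0) ∧
    r = (A i j * A k l) / (A i l * A k j)}

lemma phi_eq (A : Matrix m n ℝ) : phi A = sInf (phiSet A) := rfl

lemma phiSet_finite (A : Matrix m n ℝ) : (phiSet A).Finite := by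
  apply Set.Finite.subset (Set.finite_range
    (fun p : m × m × n × n => (A p.1 p.2.2.1 * A p.2.1 p.2.2.2) / (A p.1 p.2.2.2 * A p.2.1 p.2.2.1)))
  rintro r ⟨i, k, j, l, -, -, -, -, rfl⟩
  exact ⟨(i, k, j, l), rfl⟩

lemma matrix_exists_ne {A : Matrix m n ℝ} (hA : A ≠ 0) : ∃ i j, A i j ≠ 0 := by
  by_contra h
  push_neg at h
  exact hA (by ext i j; exact h i j)

lemma one_mem_phiSet {A : Matrix m n ℝ} (hA : A ≠ 0) : (1 : ℝ) ∈ phiSet A := by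
  obtain ⟨i, j, hij⟩ := matrix_exists_ne hA
  exact ⟨i, i, j, j, ⟨j, hij⟩, ⟨j, hij⟩, ⟨i, hij⟩, ⟨i, hij⟩,
    (div_self (mul_ne_zero hij hij)).symm⟩

lemma phiSet_nonneg {A : Matrix m n ℝ} (hA : ∀ i j, 0 ≤ A i j) :
    ∀ r ∈ phiSet A, 0 ≤ r := by
  rintro r ⟨i, k, j, l, -, -, -, -, rfl⟩
  exact div_nonneg (mul_nonneg (hA _ _) (hA _ _)) (mul_nonneg (hA _ _) (hA _ _))

lemma phi_nonneg {A : Matrix m n ℝ} (hA : ∀ i j, 0 ≤ A i j) : 0 ≤ phi A :=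
  Real.sInf_nonneg (phiSet_nonneg hA)

lemma phiSet_bddBelow {A : Matrix m n ℝ} (hA : ∀ i j, 0 ≤ A i j) : BddBelow (phiSet A) :=
  ⟨0, fun r hr => phiSet_nonneg hA r hr⟩

lemma phi_le_one {A : Matrix m n ℝ} (hA : ∀ i j, 0 ≤ A i j) (hAne : A ≠ 0) : phi A ≤ 1 :=
  csInf_le (phiSet_bddBelow hA) (one_mem_phiSet hAne)

/-- For a subrectangular matrix, any entry in a nonzero row and nonzero column is nonzero. -/
lemma subrect_entry_ne {A : Matrix m n ℝ} (hsr : Subrectangular A) {i : m} {j : n}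
    (hrow : ∃ j', A i j' ≠ 0) (hcol : ∃ i', A i' j ≠ 0) : A i j ≠ 0 := by
  obtain ⟨j', hj'⟩ := hrow
  obtain ⟨i', hi'⟩ := hcol
  exact (hsr i j' i' j hj' hi').1

lemma phi_pos {A : Matrix m n ℝ} (hA : ∀ i j, 0 ≤ A i j) (hsr : Subrectangular A)
    (hAne : A ≠ 0) : 0 < phi A := by
  have hne : (phiSet A).Nonempty := ⟨1, one_mem_phiSet hAne⟩
  have hmem := hne.csInf_mem (phiSet_finite A)
  rw [phi_eq]
  obtain ⟨i, k, j, l, hri, hrk, hcj, hcl, hval⟩ := hmem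
  rw [hval]
  have h1 : 0 < A i j := (hA i j).lt_of_ne' (subrect_entry_ne hsr hri hcj)
  have h2 : 0 < A k l := (hA k l).lt_of_ne' (subrect_entry_ne hsr hrk hcl)
  have h3 : 0 < A i l := (hA i l).lt_of_ne' (subrect_entry_ne hsr hri hcl)
  have h4 : 0 < A k j := (hA k j).lt_of_ne' (subrect_entry_ne hsr hrk hcj)
  positivity

lemma phi_le {A : Matrix m n ℝ} (hA : ∀ i j, 0 ≤ A i j) {i k : m} {j l : n}
    (hri : ∃ j', A i j' ≠ 0) (hrk : ∃ j', A k j' ≠ 0) (hcj : ∃ i', A i' j ≠ 0)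
    (hcl : ∃ i', A i' l ≠ 0) :
    phi A ≤ (A i j * A k l) / (A i l * A k j) :=
  csInf_le (phiSet_bddBelow hA) ⟨i, k, j, l, hri, hrk, hcj, hcl, rfl⟩

/-- `φ(A) · (A i l · A k j) ≤ A i j · A k l` for valid indices. -/
lemma phi_mul_le {A : Matrix m n ℝ} (hA : ∀ i j, 0 ≤ A i j) (hsr : Subrectangular A)
    {i k : m} {j l : n} (hij : A i j ≠ 0) (hkl : A k l ≠ 0) :
    phi A * (A i l * A k j) ≤ A i j * A k l := by
  have hri : ∃ j', A i j' ≠ 0 := ⟨j, hij⟩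
  have hrk : ∃ j', A k j' ≠ 0 := ⟨l, hkl⟩
  have hcj : ∃ i', A i' j ≠ 0 := ⟨i, hij⟩
  have hcl : ∃ i', A i' l ≠ 0 := ⟨k, hkl⟩
  have hil : 0 < A i l := (hA i l).lt_of_ne' (subrect_entry_ne hsr hri hcl)
  have hkj : 0 < A k j := (hA k j).lt_of_ne' (subrect_entry_ne hsr hrk hcj)
  have := phi_le hA hri hrk hcj hcl
  rw [le_div_iff₀ (by positivity)] at this
  linarith

lemma tau_nonneg {A : Matrix m n ℝ} (hA : ∀ i j, 0 ≤ A i j) (hAne : A ≠ 0) : 0 ≤ tau A := by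
  have h1 : Real.sqrt (phi A) ≤ 1 := by
    rw [show (1:ℝ) = Real.sqrt 1 by simp]
    exact Real.sqrt_le_sqrt (phi_le_one hA hAne)
  have h0 : 0 ≤ Real.sqrt (phi A) := Real.sqrt_nonneg _
  exact div_nonneg (by linarith) (by linarith)

end helpers

section projhelpers

variable {n : Type*} [Fintype n]

def projSet (x y : n → ℝ) : Set ℝ :=
  {r : ℝ | ∃ j, x j ≠ 0 ∧ ∃ l, x l ≠ 0 ∧ r = (x j / y j) / (x l / y l)}

lemma projDist_eq (x y : n → ℝ) : projDist x y = Real.log (sSup (projSet x y)) := rfl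

lemma projSet_finite (x y : n → ℝ) : (projSet x y).Finite := by
  apply Set.Finite.subset (Set.finite_range
    (fun p : n × n => (x p.1 / y p.1) / (x p.2 / y p.2)))
  rintro r ⟨j, -, l, -, rfl⟩
  exact ⟨(j, l), rfl⟩

lemma one_mem_projSet {x y : n → ℝ} {j0 : n} (hx : x j0 ≠ 0) (hy : y j0 ≠ 0) :
    (1 : ℝ) ∈ projSet x y :=
  ⟨j0, hx, j0, hx, (div_self (div_ne_zero hx hy)).symm⟩

lemma one_le_sSup_projSet {x y : n → ℝ} {j0 : n} (hx : x j0 ≠ 0) (hy : y j0 ≠ 0) :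
    1 ≤ sSup (projSet x y) :=
  le_csSup (projSet_finite x y).bddAbove (one_mem_projSet hx hy)

lemma ratio_le_sSup_projSet {x y : n → ℝ} {j l : n} (hj : x j ≠ 0) (hl : x l ≠ 0) :
    (x j / y j) / (x l / y l) ≤ sSup (projSet x y) :=
  le_csSup (projSet_finite x y).bddAbove ⟨j, hj, l, hl, rfl⟩

lemma projDist_nonneg {x y : n → ℝ} (hsupp : ∀ i, x i = 0 ↔ y i = 0) :
    0 ≤ projDist x y := by
  rw [projDist_eq]
  by_cases hx : ∃ j, x j ≠ 0
  · obtain ⟨j0, hj0⟩ := hx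
    have hy0 : y j0 ≠ 0 := fun h => hj0 ((hsupp j0).mpr h)
    exact Real.log_nonneg (one_le_sSup_projSet hj0 hy0)
  · push_neg at hx
    have : projSet x y = ∅ := by
      ext r
      simp only [projSet, Set.mem_setOf_eq, Set.mem_empty_iff_false, iff_false]
      rintro ⟨j, hj, -⟩
      exact hj (hx j)
    rw [this, Real.sSup_empty, Real.log_zero]

end projhelpers

section core

variable {m n : Type*} [Fintype m] [Fintype n]

lemma vecMul_apply (A : Matrix m n ℝ) (w : m → ℝ) (s : n) :
    Matrix.vecMul w A s = ∑ i, w i * A i s := rfl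

/-- Core Birkhoff contraction lemma. -/
lemma core_contraction {A : Matrix m n ℝ}
    (hA : ∀ i j, 0 ≤ A i j) (hsr : Subrectangular A) (hAne : A ≠ 0)
    {u v : m → ℝ} (hu : ∀ i, 0 ≤ u i) (hv : ∀ i, 0 ≤ v i)
    (hsupp : ∀ i, u i = 0 ↔ v i = 0) :
    projDist (Matrix.vecMul u A) (Matrix.vecMul v A) ≤ tau A * projDist u v := by
  classical
  have hDnn : 0 ≤ projDist u v := projDist_nonneg hsupp
  have hτnn : 0 ≤ tau A := tau_nonneg hA hAne
  set uA := Matrix.vecMul u A with huA_def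
  set vA := Matrix.vecMul v A with hvA_def
  -- positivity facts
  have huApos : ∀ s, uA s ≠ 0 → 0 < uA s := by
    intro s hs
    have : 0 ≤ uA s := by
      rw [huA_def, vecMul_apply]
      exact Finset.sum_nonneg fun i _ => mul_nonneg (hu i) (hA i s)
    exact this.lt_of_ne' hs
  have hvApos : ∀ s, uA s ≠ 0 → 0 < vA s := by
    intro s hs
    rw [huA_def, vecMul_apply] at hs
    obtain ⟨i, -, hi⟩ := Finset.exists_ne_zero_of_sum_ne_zero hs
    have hui : 0 < u i := (hu i).lt_of_ne' fun h => hi (by rw [← h]; ring_nf; simp [h])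
    have hvi : 0 < v i := (hv i).lt_of_ne' fun h => hui.ne' ((hsupp i).mpr h)
    have hAis : 0 < A i s := (hA i s).lt_of_ne' fun h => hi (by rw [h, mul_zero])
    rw [hvA_def, vecMul_apply]
    exact Finset.sum_pos' (fun i _ => mul_nonneg (hv i) (hA i s))
      ⟨i, Finset.mem_univ i, mul_pos hvi hAis⟩
  by_cases huAne : uA = 0
  · rw [huAne]
    have : projSet (0 : n → ℝ) vA = ∅ := by
      ext r
      simp [projSet]
    rw [projDist_eq, this, Real.sSup_empty, Real.log_zero]
    exact mul_nonneg hτnn hDnn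
  -- the central claim
  have claim : ∀ s t, uA s ≠ 0 → uA t ≠ 0 →
      uA s * vA t ≤ Real.exp (tau A * projDist u v) * (vA s * uA t) := by
    intro s t hs ht
    set β := sSup (projSet u v) with hβ_def
    have hD : projDist u v = Real.log β := by rw [projDist_eq]
    have hune : ∃ i, u i ≠ 0 := by
      by_contra h
      push_neg at h
      apply huAne
      rw [huA_def]
      ext s'
      rw [vecMul_apply]
      exact Finset.sum_eq_zero fun i _ => by rw [h i, zero_mul]
    obtain ⟨iu, hiu⟩ := hune
    have hviu : v iu ≠ 0 := fun h => hiu ((hsupp iu).mpr h)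
    have hβ1 : (1:ℝ) ≤ β := one_le_sSup_projSet hiu hviu
    have hSfin : (Finset.univ.filter (fun i => u i ≠ 0)).Nonempty := ⟨iu, by simp [hiu]⟩
    obtain ⟨i0, hi0mem, hmin⟩ := Finset.exists_min_image _ (fun i => u i / v i) hSfin
    have hui0 : u i0 ≠ 0 := by simpa using (Finset.mem_filter.mp hi0mem).2
    have hvi0 : v i0 ≠ 0 := fun h => hui0 ((hsupp i0).mpr h)
    have hui0p : 0 < u i0 := (hu i0).lt_of_ne' hui0
    have hvi0p : 0 < v i0 := (hv i0).lt_of_ne' hvi0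
    set m0 := u i0 / v i0 with hm0_def
    have hm0 : 0 < m0 := div_pos hui0p hvi0p
    have hlow : ∀ i, m0 * v i ≤ u i := by
      intro i
      by_cases hui : u i = 0
      · rw [hui, (hsupp i).mp hui, mul_zero]
      · have hvi : 0 < v i := (hv i).lt_of_ne' (fun h => hui ((hsupp i).mpr h))
        have h1 := hmin i (by simp [hui])
        rw [hm0_def, div_le_div_iff₀ hvi0p hvi] at h1
        rw [hm0_def, div_mul_eq_mul_div, div_le_iff₀ hvi0p]
        linarith
    have hhigh : ∀ i, u i ≤ β * (m0 * v i) := by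
      intro i
      by_cases hui : u i = 0
      · rw [hui, (hsupp i).mp hui, mul_zero, mul_zero]
      · have hvi : 0 < v i := (hv i).lt_of_ne' (fun h => hui ((hsupp i).mpr h))
        have hr := ratio_le_sSup_projSet hui hui0 (y := v)
        rw [← hm0_def, ← hβ_def, div_le_iff₀ hm0, div_le_iff₀ hvi] at hr
        calc u i ≤ β * m0 * v i := hr
          _ = β * (m0 * v i) := by ring
    have hvAs := hvApos s hs
    have hvAt := hvApos t ht
    have huAsnn : 0 ≤ uA s := (huApos s hs).le
    have huAtnn : 0 ≤ uA t := (huApos t ht).le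
    rcases eq_or_lt_of_le hβ1 with hβeq | hβgt
    · -- degenerate case β = 1 : u is proportional to v
      have huv : ∀ i, u i = m0 * v i := fun i =>
        le_antisymm (by have := hhigh i; rw [← hβeq, one_mul] at this; exact this) (hlow i)
      have h1 : uA s = m0 * vA s := by
        rw [huA_def, hvA_def, vecMul_apply, vecMul_apply, Finset.mul_sum]
        exact Finset.sum_congr rfl fun i _ => by rw [huv i]; ring
      have h2 : uA t = m0 * vA t := by
        rw [huA_def, hvA_def, vecMul_apply, vecMul_apply, Finset.mul_sum]
        exact Finset.sum_congr rfl fun i _ => by rw [huv i]; ring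
      have hexp : 1 ≤ Real.exp (tau A * projDist u v) := by
        rw [← Real.exp_zero]
        exact Real.exp_le_exp.mpr (mul_nonneg hτnn hDnn)
      rw [h1, h2]
      nlinarith [mul_pos (mul_pos hm0 hvAs) hvAt]
    · -- main case β > 1
      have hφpos : 0 < phi A := phi_pos hA hsr hAne
      have hφ1 : phi A ≤ 1 := phi_le_one hA hAne
      set F := Real.sqrt (phi A) with hF_def
      set B := Real.sqrt β with hB_def
      have hF0 : 0 < F := Real.sqrt_pos.mpr hφpos
      have hF1 : F ≤ 1 := by
        rw [hF_def, show (1:ℝ) = Real.sqrt 1 by simp]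
        exact Real.sqrt_le_sqrt hφ1
      have hB1 : 1 ≤ B := by
        rw [hB_def, show (1:ℝ) = Real.sqrt 1 by simp]
        exact Real.sqrt_le_sqrt hβ1
      have hB2 : B ^ 2 = β := Real.sq_sqrt (by linarith)
      have hF2 : F ^ 2 = phi A := Real.sq_sqrt hφpos.le
      have hβm1 : (0:ℝ) < β - 1 := by linarith
      set p : m → ℝ := fun i => (β * (m0 * v i) - u i) / (β - 1) with hp_def
      set q : m → ℝ := fun i => (u i - m0 * v i) / (β - 1) with hq_def
      have hp : ∀ i, 0 ≤ p i := fun i => div_nonneg (by linarith [hhigh i]) hβm1.le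
      have hq : ∀ i, 0 ≤ q i := fun i => div_nonneg (by linarith [hlow i]) hβm1.le
      have hpq2 : ∀ i, p i + β * q i = u i := by
        intro i
        rw [hp_def, hq_def]
        field_simp
        ring
      have hpq1 : ∀ i, p i + q i = m0 * v i := by
        intro i
        rw [hp_def, hq_def]
        field_simp
        ring
      set P : n → ℝ := fun s' => ∑ i, p i * A i s' with hP_def
      set Q : n → ℝ := fun s' => ∑ i, q i * A i s' with hQ_def
      have hPn : ∀ s', 0 ≤ P s' := fun s' =>
        Finset.sum_nonneg fun i _ => mul_nonneg (hp i) (hA i s')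
      have hQn : ∀ s', 0 ≤ Q s' := fun s' =>
        Finset.sum_nonneg fun i _ => mul_nonneg (hq i) (hA i s')
      have hu_eq : ∀ s', uA s' = P s' + B ^ 2 * Q s' := by
        intro s'
        rw [hB2, huA_def, vecMul_apply, hP_def, hQ_def]
        simp only
        rw [Finset.mul_sum, ← Finset.sum_add_distrib]
        exact Finset.sum_congr rfl fun i _ => by rw [← hpq2 i]; ring
      have hv_eq : ∀ s', m0 * vA s' = P s' + Q s' := by
        intro s'
        rw [hvA_def, vecMul_apply, hP_def, hQ_def]
        simp only
        rw [Finset.mul_sum, ← Finset.sum_add_distrib]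
        exact Finset.sum_congr rfl fun i _ => by linear_combination (A i s') * (hpq1 i).symm
      have hcon : F ^ 2 * (Q s * P t) ≤ P s * Q t := by
        rw [hF2]
        have expand1 : Q s * P t = ∑ i, ∑ k, (q i * A i s) * (p k * A k t) :=
          Finset.sum_mul_sum _ _ _ _
        have expand2 : P s * Q t = ∑ i, ∑ k, (p k * A k s) * (q i * A i t) :=
          (Finset.sum_mul_sum _ _ _ _).trans Finset.sum_comm
        rw [expand1, expand2, Finset.mul_sum]
        apply Finset.sum_le_sum
        intro i _
        rw [Finset.mul_sum]
        apply Finset.sum_le_sum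
        intro k _
        by_cases hAis : A i s = 0
        · rw [hAis]
          simp only [mul_zero, zero_mul]
          exact mul_nonneg (mul_nonneg (hp k) (hA k s)) (mul_nonneg (hq i) (hA i t))
        by_cases hAkt : A k t = 0
        · rw [hAkt]
          simp only [mul_zero, zero_mul]
          exact mul_nonneg (mul_nonneg (hp k) (hA k s)) (mul_nonneg (hq i) (hA i t))
        obtain ⟨hit, hks⟩ := hsr i s k t hAis hAkt
        have hphi := phi_mul_le hA hsr hit hks
        have h2 := mul_le_mul_of_nonneg_left hphi (mul_nonneg (hq i) (hp k))
        nlinarith [h2]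
      have hkey := key_alg hB1 hF0 hF1 (hPn s) (hQn s) (hPn t) (hQn t) hcon
      rw [← hu_eq s, ← hu_eq t, ← hv_eq s, ← hv_eq t] at hkey
      have hBF0 : (0:ℝ) < 1 + B * F := by nlinarith
      have hBFn : (0:ℝ) < B + F := by linarith
      have hτ_eq : tau A = (1 - F) / (1 + F) := rfl
      have hlogB : Real.log B = Real.log β / 2 := by
        rw [hB_def, Real.log_sqrt (by linarith)]
      have hK : (B + F) ^ 2 ≤ Real.exp (tau A * projDist u v) * (1 + B * F) ^ 2 := by
        have h1 := log_ineq hF0 hF1 hB1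
        have h3 : ((B + F) / (1 + B * F)) ^ 2 = Real.exp (2 * Real.log ((B + F) / (1 + B * F))) := by
          rw [two_mul, Real.exp_add, Real.exp_log (div_pos hBFn hBF0), sq]
        have h2 : ((B + F) / (1 + B * F)) ^ 2 ≤ Real.exp (tau A * projDist u v) := by
          rw [h3]
          apply Real.exp_le_exp.mpr
          rw [hτ_eq, hD, hlogB] at *
          linarith
        rw [div_pow, div_le_iff₀ (by positivity)] at h2
        exact h2
      have hc : (0:ℝ) < (1 + B * F) ^ 2 * m0 := by positivity
      apply le_of_mul_le_mul_right _ hc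
      calc uA s * vA t * ((1 + B * F) ^ 2 * m0)
          = uA s * (m0 * vA t) * (1 + B * F) ^ 2 := by ring
        _ ≤ (B + F) ^ 2 * ((m0 * vA s) * (uA t)) := hkey
        _ ≤ (Real.exp (tau A * projDist u v) * (1 + B * F) ^ 2) * ((m0 * vA s) * (uA t)) := by
            apply mul_le_mul_of_nonneg_right hK
            exact mul_nonneg (mul_nonneg hm0.le hvAs.le) huAtnn
        _ = Real.exp (tau A * projDist u v) * (vA s * uA t) * ((1 + B * F) ^ 2 * m0) := by ring
  -- derive the goal from the claim
  obtain ⟨s0, hs0⟩ : ∃ s, uA s ≠ 0 := by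
    by_contra h
    push_neg at h
    exact huAne (funext h)
  rw [projDist_eq]
  have hSne : (projSet uA vA).Nonempty := ⟨1, one_mem_projSet hs0 (hvApos s0 hs0).ne'⟩
  have hbound : ∀ r ∈ projSet uA vA, r ≤ Real.exp (tau A * projDist u v) := by
    rintro r ⟨s, hs, t, ht, rfl⟩
    have h1 := huApos s hs
    have h2 := hvApos s hs
    have h3 := huApos t ht
    have h4 := hvApos t ht
    have : (uA s / vA s) / (uA t / vA t) = (uA s * vA t) / (vA s * uA t) := by
      field_simp
    rw [this, div_le_iff₀ (by positivity)]
    exact claim s t hs ht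
  have hsup_le : sSup (projSet uA vA) ≤ Real.exp (tau A * projDist u v) :=
    csSup_le hSne hbound
  have hsup_pos : 0 < sSup (projSet uA vA) :=
    lt_of_lt_of_le one_pos (one_le_sSup_projSet hs0 (hvApos s0 hs0).ne')
  calc Real.log (sSup (projSet uA vA))
      ≤ Real.log (Real.exp (tau A * projDist u v)) := Real.log_le_log hsup_pos hsup_le
    _ = tau A * projDist u v := Real.log_exp _

end core

section parts

variable {k m n : Type*} [Fintype k] [Fintype m] [Fintype n]

lemma subrect_mul {M : Matrix m n ℝ} {T : Matrix k m ℝ}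
    (hMpos : ∀ i j, 0 ≤ M i j) (hTpos : ∀ i j, 0 ≤ T i j)
    (hsrM : Subrectangular M) : Subrectangular (T * M) := by
  intro i j k' l hij hkl
  rw [Matrix.mul_apply] at hij hkl
  obtain ⟨p, -, hp⟩ := Finset.exists_ne_zero_of_sum_ne_zero hij
  obtain ⟨r, -, hr⟩ := Finset.exists_ne_zero_of_sum_ne_zero hkl
  have hTip : 0 < T i p := (hTpos i p).lt_of_ne' (left_ne_zero_of_mul hp)
  have hMpj : 0 < M p j := (hMpos p j).lt_of_ne' (right_ne_zero_of_mul hp)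
  have hTkr : 0 < T k' r := (hTpos k' r).lt_of_ne' (left_ne_zero_of_mul hr)
  have hMrl : 0 < M r l := (hMpos r l).lt_of_ne' (right_ne_zero_of_mul hr)
  obtain ⟨hpl, hrj⟩ := hsrM p j r l hMpj.ne' hMrl.ne'
  constructor
  · rw [Matrix.mul_apply]
    refine (Finset.sum_pos' (fun q _ => mul_nonneg (hTpos i q) (hMpos q l))
      ⟨p, Finset.mem_univ p, mul_pos hTip ((hMpos p l).lt_of_ne' hpl)⟩).ne'
  · rw [Matrix.mul_apply]
    refine (Finset.sum_pos' (fun q _ => mul_nonneg (hTpos k' q) (hMpos q j))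
      ⟨r, Finset.mem_univ r, mul_pos hTkr ((hMpos r j).lt_of_ne' hrj)⟩).ne'

lemma phi_mul_ge {M : Matrix m n ℝ} {T : Matrix k m ℝ}
    (hMpos : ∀ i j, 0 ≤ M i j) (hTpos : ∀ i j, 0 ≤ T i j)
    (hsrM : Subrectangular M) (hMne : M ≠ 0) (hTMne : T * M ≠ 0) :
    phi M ≤ phi (T * M) := by
  have hsrTM : Subrectangular (T * M) := subrect_mul hMpos hTpos hsrM
  have hTMpos : ∀ i j, 0 ≤ (T * M) i j := fun i j => by
    rw [Matrix.mul_apply]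
    exact Finset.sum_nonneg fun q _ => mul_nonneg (hTpos i q) (hMpos q j)
  have hφM0 : 0 ≤ phi M := phi_nonneg hMpos
  rw [phi_eq (T * M)]
  apply le_csInf ⟨1, one_mem_phiSet hTMne⟩
  rintro r ⟨i, k', s, t, hri, hrk, hcs, hct, rfl⟩
  -- denominator is positive by subrectangularity
  have hden1 : (T * M) i t ≠ 0 := subrect_entry_ne hsrTM hri hct
  have hden2 : (T * M) k' s ≠ 0 := subrect_entry_ne hsrTM hrk hcs
  have hd1 : 0 < (T * M) i t := (hTMpos i t).lt_of_ne' hden1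
  have hd2 : 0 < (T * M) k' s := (hTMpos k' s).lt_of_ne' hden2
  rw [le_div_iff₀ (by positivity)]
  -- expand and compare termwise
  simp only [Matrix.mul_apply]
  rw [Finset.sum_mul_sum, Finset.sum_mul_sum, Finset.mul_sum]
  apply Finset.sum_le_sum
  intro p _
  rw [Finset.mul_sum]
  apply Finset.sum_le_sum
  intro q _
  -- goal : phi M * (T i p * M p t * (T k' q * M q s)) ≤ T i p * M p s * (T k' q * M q t)
  by_cases hMpt : M p t = 0
  · rw [hMpt]
    simp only [mul_zero, zero_mul]
    exact mul_nonneg (mul_nonneg (hTpos i p) (hMpos p s))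
      (mul_nonneg (hTpos k' q) (hMpos q t))
  by_cases hMqs : M q s = 0
  · rw [hMqs]
    simp only [mul_zero, zero_mul]
    exact mul_nonneg (mul_nonneg (hTpos i p) (hMpos p s))
      (mul_nonneg (hTpos k' q) (hMpos q t))
  obtain ⟨hMps, hMqt⟩ := hsrM p t q s hMpt hMqs
  have hphi := phi_mul_le hMpos hsrM hMps hMqt
  -- phi M * (M p s * M q t) ≤ M p t * M q s ... check orientation
  have hTT : 0 ≤ T i p * T k' q := mul_nonneg (hTpos i p) (hTpos k' q)
  nlinarith [mul_le_mul_of_nonneg_left hphi hTT]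

end parts

lemma tau_anti_aux {a b : ℝ} (ha : 0 ≤ a) (hab : a ≤ b) :
    (1 - Real.sqrt b) / (1 + Real.sqrt b) ≤ (1 - Real.sqrt a) / (1 + Real.sqrt a) := by
  have hsa : 0 ≤ Real.sqrt a := Real.sqrt_nonneg a
  have hsb : Real.sqrt a ≤ Real.sqrt b := Real.sqrt_le_sqrt hab
  have d1 : (0:ℝ) < 1 + Real.sqrt a := by linarith
  have d2 : (0:ℝ) < 1 + Real.sqrt b := by linarith
  rw [div_le_div_iff₀ d2 d1]
  nlinarith

/-- For a nonzero subrectangular nonnegative `M` and nonnegative `T` with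
`T·M` nonzero: `φ(T·M) ≥ φ(M)` and `τ(T·M) ≤ τ(M)`; if moreover `T` is nonzero and
subrectangular, then `d(xᵀTM, yᵀTM) ≤ τ(T)·τ(M)·d(x,y)` for all positive `x, y`. -/
theorem stmt_9 {k m n : Type*} [Fintype k] [Fintype m] [Fintype n]
    (M : Matrix m n ℝ) (T : Matrix k m ℝ)
    (hMpos : ∀ i j, 0 ≤ M i j) (hTpos : ∀ i j, 0 ≤ T i j)
    (hsrM : Subrectangular M) (hMne : M ≠ 0) (hTMne : T * M ≠ 0) :
    phi M ≤ phi (T * M) ∧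
    tau (T * M) ≤ tau M ∧
    (T ≠ 0 → Subrectangular T →
      ∀ x y : k → ℝ, (∀ i, 0 < x i) → (∀ i, 0 < y i) →
        projDist (Matrix.vecMul x (T * M)) (Matrix.vecMul y (T * M)) ≤
          tau T * tau M * projDist x y) := by
  have hphile := phi_mul_ge hMpos hTpos hsrM hMne hTMne
  refine ⟨hphile, tau_anti_aux (phi_nonneg hMpos) hphile, ?_⟩
  intro hTne hsrT x y hx hy
  have hsuppT : ∀ (z : k → ℝ), (∀ i, 0 < z i) →
      ∀ p, (Matrix.vecMul z T p = 0 ↔ ∀ i, T i p = 0) := by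
    intro z hz p
    rw [vecMul_apply]
    constructor
    · intro h i
      have h0 := (Finset.sum_eq_zero_iff_of_nonneg
        (fun i _ => mul_nonneg (hz i).le (hTpos i p))).mp h i (Finset.mem_univ i)
      rcases mul_eq_zero.mp h0 with h' | h'
      · exact absurd h' (hz i).ne'
      · exact h'
    · intro h
      exact Finset.sum_eq_zero fun i _ => by rw [h i, mul_zero]
  have hsupp : ∀ p, Matrix.vecMul x T p = 0 ↔ Matrix.vecMul y T p = 0 := by
    intro p
    rw [hsuppT x hx p, hsuppT y hy p]
  have hxTnn : ∀ p, 0 ≤ Matrix.vecMul x T p := fun p => by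
    rw [vecMul_apply]
    exact Finset.sum_nonneg fun i _ => mul_nonneg (hx i).le (hTpos i p)
  have hyTnn : ∀ p, 0 ≤ Matrix.vecMul y T p := fun p => by
    rw [vecMul_apply]
    exact Finset.sum_nonneg fun i _ => mul_nonneg (hy i).le (hTpos i p)
  have step1 : projDist (Matrix.vecMul (Matrix.vecMul x T) M)
      (Matrix.vecMul (Matrix.vecMul y T) M) ≤
      tau M * projDist (Matrix.vecMul x T) (Matrix.vecMul y T) :=
    core_contraction hMpos hsrM hMne hxTnn hyTnn hsupp
  have step2 : projDist (Matrix.vecMul x T) (Matrix.vecMul y T) ≤ tau T * projDist x y :=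
    core_contraction hTpos hsrT hTne (fun i => (hx i).le) (fun i => (hy i).le)
      (fun i => iff_of_false (hx i).ne' (hy i).ne')
  have hτM : 0 ≤ tau M := tau_nonneg hMpos hMne
  calc projDist (Matrix.vecMul x (T * M)) (Matrix.vecMul y (T * M))
      = projDist (Matrix.vecMul (Matrix.vecMul x T) M)
          (Matrix.vecMul (Matrix.vecMul y T) M) := by
        rw [Matrix.vecMul_vecMul, Matrix.vecMul_vecMul]
    _ ≤ tau M * projDist (Matrix.vecMul x T) (Matrix.vecMul y T) := step1
    _ ≤ tau M * (tau T * projDist x y) := mul_le_mul_of_nonneg_left step2 hτM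
    _ = tau T * tau M * projDist x y := by ring
end

section
/- Let M₁, M₂, …, M_m and T be square nonnegative real matrices of the same size, each nonzero, with every M_ℓ (1 ≤ ℓ ≤ m) subrectangular, and let x, y be nonnegative nonzero vectors. Write x̃ᵀ = xᵀ·M₁, ỹᵀ = yᵀ·M₁, and M₁^m = M₁·M₂⋯M_m. If ‖xᵀ·M₁^m·T‖₁ > 0 and ‖yᵀ·M₁^m·T‖₁ > 0, then ln( (‖xᵀ·M₁^m·T‖₁ / ‖yᵀ·M₁^m·T‖₁) · (‖yᵀ·M₁^m‖₁ / ‖xᵀ·M₁^m‖₁) ) ≤ d(x̃, ỹ) · ∏_{ℓ=2}^{m} τ(M_ℓ). -/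
/-- The ordered product `M₁ · M₂ ⋯ M_s` of a sequence of square matrices. -/
def prodSeq {n : Type*} [Fintype n] [DecidableEq n]
    (M : ℕ → Matrix n n ℝ) (s : ℕ) : Matrix n n ℝ :=
  ((List.range s).map fun ℓ => M (ℓ + 1)).prod

/-!
Write `D(u, v) = exp d(u, v)` for the largest cross ratio `(u j / v j) / (u l / v l)`; if `u` and
`v` have the same support, then `α v ≤ u ≤ D α v` for some `α ≥ 0`. Since `‖z T‖₁ = Σ z_i r_i`
with `r` the row sums of `T`, this sandwich bounds the norm ratio of the statement by
`D(x M₁^m, y M₁^m)`. Subrectangularity makes the support of `u M` the set of nonzero columns of `M`,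
independently of `u`, so all the vectors `x M₁^s`, `y M₁^s` (`s ≥ 1`) have matching supports, and
Birkhoff's contraction `d(u M, v M) ≤ τ(M) d(u, v)` can be iterated for `ℓ = 2, …, m`.

For Birkhoff's contraction fix two nonzero columns `j, l` of `M`. The cross ratio
`(u M)_j (v M)_l / ((v M)_j (u M)_l)` is linear-fractional in `u`, so it is largest when
`u = D α v` on the rows where a certain linear form is nonnegative and `u = α v` on the others.
This reduces everything to a 2 × 2 inequality in the four block sums, whose hypothesis is the
definition of `φ(M)`; with `δ² = D` and `f² = φ(M)` it gives
`D(u M, v M) ≤ ((δ + f) / (1 + δ f))²`, and `log ((δ + f) / (1 + δ f)) ≤ τ(M) log δ` by calculus.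
-/

open Finset Matrix

lemma two_mul_mul_le_of_cross {a b c d δ f : ℝ} (ha : 0 ≤ a) (hb : 0 ≤ b) (hc : 0 ≤ c)
    (hd : 0 ≤ d) (hf : 0 < f) (hcross : f ^ 2 * (b * c) ≤ a * d) :
    2 * δ * f * (b * c) ≤ a * c + δ ^ 2 * (b * d) := by
  rcases ha.eq_or_lt with rfl | ha
  · have : b * c = 0 := by nlinarith [mul_nonneg hb hc, sq_pos_of_pos hf]
    rw [this]; nlinarith [mul_nonneg (sq_nonneg δ) (mul_nonneg hb hd)]
  · -- times `a`, this is `c (a - δ f b)² + δ² b (a d - f² b c) ≥ 0`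
    refine le_of_mul_le_mul_left ?_ ha
    nlinarith [mul_nonneg hc (sq_nonneg (a - δ * f * b)),
      mul_nonneg (mul_nonneg (sq_nonneg δ) hb) (sub_nonneg.2 hcross)]

lemma birkhoff_two_by_two {a b c d δ f : ℝ} (ha : 0 ≤ a) (hb : 0 ≤ b) (hc : 0 ≤ c)
    (hd : 0 ≤ d) (hδ : 1 ≤ δ) (hf0 : 0 < f) (hf1 : f ≤ 1) (hcross : f ^ 2 * (b * c) ≤ a * d) :
    (a + δ ^ 2 * b) * (c + d) * (1 + δ * f) ^ 2 ≤ (δ + f) ^ 2 * ((a + b) * (c + δ ^ 2 * d)) := by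
  have hδ2 : 0 ≤ δ ^ 2 - 1 := by nlinarith
  have hf2 : 0 ≤ 1 - f ^ 2 := by nlinarith
  have hamgm := two_mul_mul_le_of_cross (δ := δ) ha hb hc hd hf0 hcross
  have key : (δ + f) ^ 2 * ((a + b) * (c + δ ^ 2 * d)) - (a + δ ^ 2 * b) * (c + d) * (1 + δ * f) ^ 2
      = (δ ^ 2 - 1) * ((1 - f ^ 2) * (a * c + δ ^ 2 * (b * d) - 2 * δ * f * (b * c))
        + (δ ^ 2 + 2 * δ * f + 1) * (a * d - f ^ 2 * (b * c))) := by ring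
  rw [← sub_nonneg, key]
  exact mul_nonneg hδ2 (add_nonneg (mul_nonneg hf2 (by linarith))
    (mul_nonneg (by nlinarith) (by linarith)))

section Inequalities
variable {ι : Type*} {a b u v : ι → ℝ} {f : ℝ}

lemma sum_mul_sum_cross_le (A B : Finset ι) (hv : ∀ i, 0 ≤ v i)
    (hcross : ∀ i k, f ^ 2 * (a i * b k) ≤ b i * a k) :
    f ^ 2 * ((∑ i ∈ B, v i * a i) * ∑ k ∈ A, v k * b k) ≤
      (∑ k ∈ A, v k * a k) * ∑ i ∈ B, v i * b i := by
  rw [sum_mul_sum, sum_mul_sum, sum_comm, mul_sum]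
  refine sum_le_sum fun k _ => ?_
  rw [mul_sum]
  refine sum_le_sum fun i _ => ?_
  calc f ^ 2 * (v i * a i * (v k * b k)) = v i * v k * (f ^ 2 * (a i * b k)) := by ring
    _ ≤ v i * v k * (b i * a k) := mul_le_mul_of_nonneg_left (hcross i k) (mul_nonneg (hv i) (hv k))
    _ = v k * a k * (v i * b i) := by ring

lemma sum_mul_sum_le_of_cross (s : Finset ι) {α δ : ℝ} (ha : ∀ i, 0 ≤ a i) (hb : ∀ i, 0 ≤ b i)
    (hv : ∀ i, 0 ≤ v i) (hα : 0 ≤ α) (hδ : 1 ≤ δ) (hf0 : 0 < f) (hf1 : f ≤ 1)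
    (hcross : ∀ i k, f ^ 2 * (a i * b k) ≤ b i * a k)
    (hlow : ∀ i, α * v i ≤ u i) (hhigh : ∀ i, u i ≤ δ ^ 2 * α * v i) :
    (∑ i ∈ s, u i * a i) * (∑ i ∈ s, v i * b i) * (1 + δ * f) ^ 2 ≤
      (δ + f) ^ 2 * ((∑ i ∈ s, v i * a i) * ∑ i ∈ s, u i * b i) := by
  set Va := ∑ i ∈ s, v i * a i
  set Vb := ∑ i ∈ s, v i * b i
  set c : ι → ℝ := fun i => a i * Vb * (1 + δ * f) ^ 2 - (δ + f) ^ 2 * (Va * b i) with hc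
  have hsum_c : ∀ (g : ι → ℝ) (t : Finset ι), ∑ i ∈ t, g i * c i =
      (∑ i ∈ t, g i * a i) * Vb * (1 + δ * f) ^ 2 - (δ + f) ^ 2 * (Va * ∑ i ∈ t, g i * b i) := by
    intro g t
    simp only [hc, sum_mul, mul_sum, ← sum_sub_distrib]
    exact sum_congr rfl fun i _ => by ring
  -- `u` enters linearly: the extreme case is `u = δ² α v` where `c ≥ 0` and `u = α v` elsewhere
  set B := s.filter fun i => 0 ≤ c i
  set A := s.filter fun i => ¬ 0 ≤ c i
  have hextreme : ∑ i ∈ s, u i * c i ≤ δ ^ 2 * α * ∑ i ∈ B, v i * c i + α * ∑ i ∈ A, v i * c i := by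
    rw [← sum_filter_add_sum_filter_not s (fun i => 0 ≤ c i), mul_sum, mul_sum]
    refine add_le_add (sum_le_sum fun i hi => ?_) (sum_le_sum fun i hi => ?_)
    · calc u i * c i ≤ δ ^ 2 * α * v i * c i :=
            mul_le_mul_of_nonneg_right (hhigh i) (mem_filter.1 hi).2
        _ = δ ^ 2 * α * (v i * c i) := by ring
    · calc u i * c i ≤ α * v i * c i :=
            mul_le_mul_of_nonpos_right (hlow i) (le_of_not_ge (mem_filter.1 hi).2)
        _ = α * (v i * c i) := by ring
  have hVa : Va = ∑ i ∈ A, v i * a i + ∑ i ∈ B, v i * a i := by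
    rw [add_comm]; exact (sum_filter_add_sum_filter_not _ _ _).symm
  have hVb : Vb = ∑ i ∈ A, v i * b i + ∑ i ∈ B, v i * b i := by
    rw [add_comm]; exact (sum_filter_add_sum_filter_not _ _ _).symm
  have hva : ∀ t : Finset ι, 0 ≤ ∑ i ∈ t, v i * a i := fun t =>
    sum_nonneg fun i _ => mul_nonneg (hv i) (ha i)
  have hvb : ∀ t : Finset ι, 0 ≤ ∑ i ∈ t, v i * b i := fun t =>
    sum_nonneg fun i _ => mul_nonneg (hv i) (hb i)
  have h22 := birkhoff_two_by_two (hva A) (hva B) (hvb A) (hvb B) hδ hf0 hf1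
    (sum_mul_sum_cross_le A B hv hcross)
  rw [← hVa, ← hVb] at h22
  have hnonpos : δ ^ 2 * ∑ i ∈ B, v i * c i + ∑ i ∈ A, v i * c i ≤ 0 := by
    rw [hsum_c, hsum_c]
    linear_combination h22
  linear_combination (hsum_c u s).symm + hextreme + mul_nonpos_of_nonneg_of_nonpos hα hnonpos

end Inequalities

lemma log_add_div_one_add_mul_le {δ f : ℝ} (hδ : 1 ≤ δ) (hf0 : 0 < f) (hf1 : f ≤ 1) :
    Real.log ((δ + f) / (1 + δ * f)) ≤ (1 - f) / (1 + f) * Real.log δ := by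
  set g : ℝ → ℝ := fun t => (1 - f) / (1 + f) * Real.log t - Real.log (t + f) + Real.log (1 + t * f)
  have hg' : ∀ t, 1 ≤ t →
      HasDerivAt g ((1 - f) / (1 + f) * t⁻¹ - 1 / (t + f) + 1 * f / (1 + t * f)) t := fun t ht =>
    (((Real.hasDerivAt_log (by positivity)).const_mul _).sub
      (((hasDerivAt_id t).add_const f).log (by positivity))).add
      ((((hasDerivAt_id t).mul_const f).const_add 1).log (by dsimp only [id]; positivity))
  have hmono : MonotoneOn g (Set.Ici 1) := by
    refine monotoneOn_of_deriv_nonneg (convex_Ici 1)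
      (fun t ht => (hg' t ht).continuousAt.continuousWithinAt)
      (fun t ht => (hg' t (interior_subset ht)).differentiableAt.differentiableWithinAt)
      (fun t ht => ?_)
    rw [interior_Ici, Set.mem_Ioi] at ht
    rw [(hg' t ht.le).deriv]
    have : (1 - f) / (1 + f) * t⁻¹ - 1 / (t + f) + 1 * f / (1 + t * f)
        = (1 - f) * f * (t - 1) ^ 2 / ((1 + f) * (t * ((t + f) * (1 + t * f)))) := by
      field_simp
      ring
    rw [this]
    have : 0 ≤ 1 - f := by linarith
    positivity
  have := hmono Set.self_mem_Ici hδ hδ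
  simp only [g, Real.log_one, mul_zero, zero_sub, one_mul] at this
  rw [Real.log_div (by positivity) (by positivity)]
  linarith

section MaxRatio
variable {n : Type*} {u v : n → ℝ}

lemma apply_eq_zero_iff_of_support_eq (h : u.support = v.support) (i : n) : u i = 0 ↔ v i = 0 := by
  simpa using (Set.ext_iff.1 h i).not

def projRatios (u v : n → ℝ) : Set ℝ :=
  {r : ℝ | ∃ j, u j ≠ 0 ∧ ∃ l, u l ≠ 0 ∧ r = (u j / v j) / (u l / v l)}

noncomputable def maxRatio (u v : n → ℝ) : ℝ := sSup (projRatios u v)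

lemma projDist_eq_log_maxRatio (u v : n → ℝ) : projDist u v = Real.log (maxRatio u v) := rfl

lemma bddAbove_projRatios [Finite n] (u v : n → ℝ) : BddAbove (projRatios u v) := by
  refine ((Set.finite_range fun p : n × n => (u p.1 / v p.1) / (u p.2 / v p.2)).subset ?_).bddAbove
  rintro r ⟨j, -, l, -, rfl⟩
  exact ⟨(j, l), rfl⟩

lemma one_le_maxRatio [Finite n] (hsupp : u.support = v.support) (hu : u ≠ 0) :
    1 ≤ maxRatio u v := by
  obtain ⟨j, hj⟩ := Function.ne_iff.mp hu
  have hvj : v j ≠ 0 := (apply_eq_zero_iff_of_support_eq hsupp j).not.1 hj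
  exact le_csSup (bddAbove_projRatios u v) ⟨j, hj, j, hj, (div_self (div_ne_zero hj hvj)).symm⟩

lemma maxRatio_nonneg (hu : ∀ i, 0 ≤ u i) (hv : ∀ i, 0 ≤ v i) : 0 ≤ maxRatio u v := by
  refine Real.sSup_nonneg ?_
  rintro r ⟨j, -, l, -, rfl⟩
  have := hu j; have := hu l; have := hv j; have := hv l
  positivity

lemma mul_le_maxRatio_mul [Finite n] (hu : ∀ i, 0 ≤ u i) (hv : ∀ i, 0 ≤ v i)
    (hsupp : u.support = v.support) (j l : n) :
    u j * v l ≤ maxRatio u v * (v j * u l) := by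
  have hD := maxRatio_nonneg hu hv
  by_cases hj : u j = 0
  · rw [hj, zero_mul]; have := hv j; have := hu l; positivity
  by_cases hl : u l = 0
  · have hvl : v l = 0 := (apply_eq_zero_iff_of_support_eq hsupp l).1 hl
    rw [hvl, mul_zero]; have := hv j; have := hu l; positivity
  have hvj : 0 < v j := (hv j).lt_of_ne' ((apply_eq_zero_iff_of_support_eq hsupp j).not.1 hj)
  have hvl : 0 < v l := (hv l).lt_of_ne' ((apply_eq_zero_iff_of_support_eq hsupp l).not.1 hl)
  have hul : 0 < u l := (hu l).lt_of_ne' hl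
  have hle : (u j / v j) / (u l / v l) ≤ maxRatio u v :=
    le_csSup (bddAbove_projRatios u v) ⟨j, hj, l, hl, rfl⟩
  rw [div_le_iff₀ (by positivity), div_le_iff₀ hvj] at hle
  calc u j * v l ≤ maxRatio u v * (u l / v l) * v j * v l := by gcongr
    _ = maxRatio u v * (v j * u l) := by field_simp

lemma maxRatio_le {K : ℝ} (hK : 0 ≤ K) (hu : ∀ i, 0 ≤ u i) (hv : ∀ i, u i ≠ 0 → 0 < v i)
    (h : ∀ j l, u j ≠ 0 → u l ≠ 0 → u j * v l ≤ K * (v j * u l)) : maxRatio u v ≤ K := by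
  refine Real.sSup_le ?_ hK
  rintro r ⟨j, hj, l, hl, rfl⟩
  have := hv j hj; have := hv l hl
  have := (hu l).lt_of_ne' hl
  rw [div_div_div_eq, div_le_iff₀ (by positivity)]
  linarith [h j l hj hl]

lemma exists_sandwich_maxRatio [Finite n] (hu : ∀ i, 0 ≤ u i) (hv : ∀ i, 0 ≤ v i)
    (hsupp : u.support = v.support) :
    ∃ α, 0 ≤ α ∧ ∀ i, α * v i ≤ u i ∧ u i ≤ maxRatio u v * α * v i := by
  have : Fintype n := Fintype.ofFinite n
  by_cases hS : ∃ k, u k ≠ 0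
  swap
  · push Not at hS
    exact ⟨0, le_rfl, fun i => by simp [hS i, (apply_eq_zero_iff_of_support_eq hsupp i).1 (hS i)]⟩
  obtain ⟨k, hk, hmin⟩ := exists_min_image (univ.filter fun i => u i ≠ 0)
    (fun i => u i / v i) (by simpa [Finset.Nonempty] using hS)
  have hk : u k ≠ 0 := (mem_filter.1 hk).2
  have hvk : 0 < v k := (hv k).lt_of_ne' ((apply_eq_zero_iff_of_support_eq hsupp k).not.1 hk)
  refine ⟨u k / v k, div_nonneg (hu k) hvk.le, fun i => ⟨?_, ?_⟩⟩
  · by_cases hi : u i = 0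
    · simp [hi, (apply_eq_zero_iff_of_support_eq hsupp i).1 hi]
    · have hvi : 0 < v i := (hv i).lt_of_ne' ((apply_eq_zero_iff_of_support_eq hsupp i).not.1 hi)
      exact (le_div_iff₀ hvi).1 (hmin i (by simpa using hi))
  · have := mul_le_maxRatio_mul hu hv hsupp i k
    rw [mul_div_assoc', div_mul_eq_mul_div, le_div_iff₀ hvk]
    linarith

end MaxRatio

section Phi
variable {n : Type*} {M : Matrix n n ℝ}

lemma Subrectangular.apply_ne_zero (hsr : Subrectangular M) {i j : n}
    (hrow : ∃ j', M i j' ≠ 0) (hcol : ∃ i', M i' j ≠ 0) : M i j ≠ 0 := by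
  obtain ⟨j', hj'⟩ := hrow
  obtain ⟨i', hi'⟩ := hcol
  exact (hsr i j' i' j hj' hi').1

def phiRatios (M : Matrix n n ℝ) : Set ℝ :=
  {r : ℝ | ∃ i k j l,
    (∃ j', M i j' ≠ 0) ∧ (∃ j', M k j' ≠ 0) ∧ (∃ i', M i' j ≠ 0) ∧ (∃ i', M i' l ≠ 0) ∧
    r = (M i j * M k l) / (M i l * M k j)}

lemma phi_eq_sInf (M : Matrix n n ℝ) : phi M = sInf (phiRatios M) := rfl

lemma finite_phiRatios [Finite n] (M : Matrix n n ℝ) : (phiRatios M).Finite := by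
  refine (Set.finite_range fun p : (n × n) × (n × n) =>
    (M p.1.1 p.2.1 * M p.1.2 p.2.2) / (M p.1.1 p.2.2 * M p.1.2 p.2.1)).subset ?_
  rintro r ⟨i, k, j, l, -, -, -, -, rfl⟩
  exact ⟨((i, k), (j, l)), rfl⟩

lemma phi_pos_s11 [Finite n] (hM : ∀ i j, 0 ≤ M i j) (hsr : Subrectangular M) (hne : M ≠ 0) :
    0 < phi M := by
  obtain ⟨i, j, hij⟩ : ∃ i j, M i j ≠ 0 := by
    by_contra! h
    exact hne (Matrix.ext h)
  obtain ⟨i, k, j, l, hri, hrk, hcj, hcl, hval⟩ :=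
    Set.Nonempty.csInf_mem (s := phiRatios M)
      ⟨_, i, i, j, j, ⟨j, hij⟩, ⟨j, hij⟩, ⟨i, hij⟩, ⟨i, hij⟩, rfl⟩
      (finite_phiRatios M)
  have pos : ∀ {a b}, (∃ j', M a j' ≠ 0) → (∃ i', M i' b ≠ 0) → 0 < M a b := fun hr hc =>
    (hM _ _).lt_of_ne' (hsr.apply_ne_zero hr hc)
  rw [phi_eq_sInf, hval]
  have := pos hri hcj; have := pos hrk hcl; have := pos hri hcl; have := pos hrk hcj
  positivity

lemma phi_le_one_s11 [Finite n] (M : Matrix n n ℝ) : phi M ≤ 1 := by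
  by_cases h : ∃ i j, M i j ≠ 0
  · obtain ⟨i, j, hij⟩ := h
    exact csInf_le (finite_phiRatios M).bddBelow
      ⟨i, i, j, j, ⟨j, hij⟩, ⟨j, hij⟩, ⟨i, hij⟩, ⟨i, hij⟩, (div_self (mul_ne_zero hij hij)).symm⟩
  · push Not at h
    have : phiRatios M = ∅ := by
      ext r; simp [phiRatios, h]
    rw [phi_eq_sInf, this, Real.sInf_empty]
    exact zero_le_one

lemma tau_nonneg_s11 [Finite n] (M : Matrix n n ℝ) : 0 ≤ tau M := by
  have := Real.sqrt_le_one.2 (phi_le_one_s11 M)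
  unfold tau
  apply div_nonneg <;> linarith [Real.sqrt_nonneg (phi M)]

lemma phi_mul_le_s11 [Finite n] (hM : ∀ i j, 0 ≤ M i j) (hsr : Subrectangular M) {j l : n}
    (hcj : ∃ i', M i' j ≠ 0) (hcl : ∃ i', M i' l ≠ 0) (i k : n) :
    phi M * (M i j * M k l) ≤ M i l * M k j := by
  by_cases hri : ∃ j', M i j' ≠ 0
  swap
  · push Not at hri; simp [hri]
  by_cases hrk : ∃ j', M k j' ≠ 0
  swap
  · push Not at hrk; simp [hrk]
  have hle : phi M ≤ (M i l * M k j) / (M i j * M k l) :=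
    csInf_le (finite_phiRatios M).bddBelow ⟨i, k, l, j, hri, hrk, hcl, hcj, rfl⟩
  have h1 := (hM i j).lt_of_ne' (hsr.apply_ne_zero hri hcj)
  have h2 := (hM k l).lt_of_ne' (hsr.apply_ne_zero hrk hcl)
  rwa [le_div_iff₀ (by positivity)] at hle

end Phi

section Birkhoff
variable {n : Type*} [Fintype n] {M : Matrix n n ℝ} {u v : n → ℝ}

lemma vecMul_apply_nonneg (hu : ∀ i, 0 ≤ u i) (hM : ∀ i j, 0 ≤ M i j) (j : n) :
    0 ≤ (u ᵥ* M) j :=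
  sum_nonneg fun i _ => mul_nonneg (hu i) (hM i j)

lemma exists_apply_ne_zero_of_vecMul_apply_ne_zero {j : n} (h : (u ᵥ* M) j ≠ 0) :
    ∃ i, u i ≠ 0 ∧ M i j ≠ 0 := by
  obtain ⟨i, -, hi⟩ := exists_ne_zero_of_sum_ne_zero h
  exact ⟨i, left_ne_zero_of_mul hi, right_ne_zero_of_mul hi⟩

lemma vecMul_apply_pos (hv : ∀ i, 0 ≤ v i) (hM : ∀ i j, 0 ≤ M i j) {i j : n} (hvi : v i ≠ 0)
    (hij : M i j ≠ 0) : 0 < (v ᵥ* M) j :=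
  sum_pos' (fun i _ => mul_nonneg (hv i) (hM i j))
    ⟨i, mem_univ i, mul_pos ((hv i).lt_of_ne' hvi) ((hM i j).lt_of_ne' hij)⟩

lemma support_vecMul_of_subrectangular (hM : ∀ i j, 0 ≤ M i j) (hsr : Subrectangular M)
    (hu : ∀ i, 0 ≤ u i) (hne : u ᵥ* M ≠ 0) : (u ᵥ* M).support = {j | ∃ i, M i j ≠ 0} := by
  obtain ⟨j₀, hj₀⟩ := Function.ne_iff.mp hne
  obtain ⟨i₀, hui₀, hMi₀⟩ := exists_apply_ne_zero_of_vecMul_apply_ne_zero hj₀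
  ext j
  refine ⟨fun hj => ?_, fun ⟨i, hi⟩ => ?_⟩
  · obtain ⟨i, -, hi⟩ := exists_apply_ne_zero_of_vecMul_apply_ne_zero hj
    exact ⟨i, hi⟩
  · exact (vecMul_apply_pos hu hM hui₀ (hsr i₀ j₀ i j hMi₀ hi).1).ne'

lemma vecMul_ne_zero_of_support_eq (hv : ∀ i, 0 ≤ v i) (hM : ∀ i j, 0 ≤ M i j)
    (hsupp : u.support = v.support) (hne : u ᵥ* M ≠ 0) : v ᵥ* M ≠ 0 := by
  obtain ⟨j, hj⟩ := Function.ne_iff.mp hne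
  obtain ⟨i, hui, hij⟩ := exists_apply_ne_zero_of_vecMul_apply_ne_zero hj
  have hvi := (apply_eq_zero_iff_of_support_eq hsupp i).not.1 hui
  exact Function.ne_iff.mpr ⟨j, (vecMul_apply_pos hv hM hvi hij).ne'⟩

lemma support_vecMul_eq_of_subrectangular (hM : ∀ i j, 0 ≤ M i j) (hsr : Subrectangular M)
    (hu : ∀ i, 0 ≤ u i) (hv : ∀ i, 0 ≤ v i) (hsupp : u.support = v.support) (hne : u ᵥ* M ≠ 0) :
    (u ᵥ* M).support = (v ᵥ* M).support := by
  rw [support_vecMul_of_subrectangular hM hsr hu hne,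
    support_vecMul_of_subrectangular hM hsr hv (vecMul_ne_zero_of_support_eq hv hM hsupp hne)]

theorem projDist_vecMul_le_tau_mul (hM : ∀ i j, 0 ≤ M i j) (hsr : Subrectangular M)
    (hu : ∀ i, 0 ≤ u i) (hv : ∀ i, 0 ≤ v i) (hsupp : u.support = v.support) (hne : u ᵥ* M ≠ 0) :
    projDist (u ᵥ* M) (v ᵥ* M) ≤ tau M * projDist u v := by
  have hsuppM := support_vecMul_eq_of_subrectangular hM hsr hu hv hsupp hne
  have hMne : M ≠ 0 := by rintro rfl; simp at hne
  have hune : u ≠ 0 := by rintro rfl; simp at hne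
  set f := Real.sqrt (phi M) with hf
  have hf0 : 0 < f := Real.sqrt_pos.2 (phi_pos_s11 hM hsr hMne)
  have hf1 : f ≤ 1 := Real.sqrt_le_one.2 (phi_le_one_s11 M)
  have hf2 : f ^ 2 = phi M := Real.sq_sqrt (phi_pos_s11 hM hsr hMne).le
  set δ := Real.sqrt (maxRatio u v)
  have hδ1 : 1 ≤ δ := Real.one_le_sqrt.2 (one_le_maxRatio hsupp hune)
  have hδ2 : δ ^ 2 = maxRatio u v := Real.sq_sqrt (by linarith [one_le_maxRatio hsupp hune])
  obtain ⟨α, hα, hsand⟩ := exists_sandwich_maxRatio hu hv hsupp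
  have hcol : ∀ j, (u ᵥ* M) j ≠ 0 → ∃ i, M i j ≠ 0 := fun j hj =>
    (Set.ext_iff.1 (support_vecMul_of_subrectangular hM hsr hu hne) j).1 hj
  have hbound : maxRatio (u ᵥ* M) (v ᵥ* M) ≤ ((δ + f) / (1 + δ * f)) ^ 2 := by
    refine maxRatio_le (by positivity) (vecMul_apply_nonneg hu hM)
      (fun j hj => (vecMul_apply_nonneg hv hM j).lt_of_ne'
        ((apply_eq_zero_iff_of_support_eq hsuppM j).not.1 hj)) fun j l hj hl => ?_
    rw [div_pow, div_mul_eq_mul_div, le_div_iff₀ (by positivity)]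
    exact sum_mul_sum_le_of_cross univ (a := fun i => M i j) (b := fun i => M i l)
      (fun i => hM i j) (fun i => hM i l) hv hα hδ1 hf0 hf1
      (by rw [hf2]; exact phi_mul_le_s11 hM hsr (hcol j hj) (hcol l hl))
      (fun i => (hsand i).1) (fun i => hδ2 ▸ (hsand i).2)
  calc projDist (u ᵥ* M) (v ᵥ* M) ≤ Real.log (((δ + f) / (1 + δ * f)) ^ 2) :=
        Real.log_le_log (zero_lt_one.trans_le (one_le_maxRatio hsuppM hne)) hbound
    _ = 2 * Real.log ((δ + f) / (1 + δ * f)) := by rw [Real.log_pow]; norm_num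
    _ ≤ 2 * ((1 - f) / (1 + f) * Real.log δ) := by
        gcongr; exact log_add_div_one_add_mul_le hδ1 hf0 hf1
    _ = tau M * projDist u v := by
        rw [projDist_eq_log_maxRatio, ← hδ2, Real.log_pow, tau, ← hf]; push_cast; ring

end Birkhoff

section Norms
variable {n : Type*} [Fintype n] {z w : n → ℝ}

lemma sum_mul_mul_sum_le_maxRatio (hz : ∀ i, 0 ≤ z i) (hw : ∀ i, 0 ≤ w i)
    (hsupp : z.support = w.support) {r : n → ℝ} (hr : ∀ i, 0 ≤ r i) :
    (∑ i, z i * r i) * ∑ i, w i ≤ maxRatio z w * ((∑ i, w i * r i) * ∑ i, z i) := by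
  obtain ⟨α, -, hsand⟩ := exists_sandwich_maxRatio hz hw hsupp
  have hD : 0 ≤ maxRatio z w := maxRatio_nonneg hz hw
  have hup : ∑ i, z i * r i ≤ maxRatio z w * α * ∑ i, w i * r i := by
    rw [mul_sum]
    exact sum_le_sum fun i _ => by nlinarith [(hsand i).2, hr i]
  have hlow : α * ∑ i, w i ≤ ∑ i, z i := by
    rw [mul_sum]
    exact sum_le_sum fun i _ => (hsand i).1
  calc (∑ i, z i * r i) * ∑ i, w i ≤ maxRatio z w * α * (∑ i, w i * r i) * ∑ i, w i := by
        gcongr; exact sum_nonneg fun i _ => hw i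
    _ = maxRatio z w * (∑ i, w i * r i) * (α * ∑ i, w i) := by ring
    _ ≤ maxRatio z w * (∑ i, w i * r i) * ∑ i, z i :=
        mul_le_mul_of_nonneg_left hlow
          (mul_nonneg hD (sum_nonneg fun i _ => mul_nonneg (hw i) (hr i)))
    _ = maxRatio z w * ((∑ i, w i * r i) * ∑ i, z i) := by ring

lemma sum_abs_vecMul {T : Matrix n n ℝ} (hz : ∀ i, 0 ≤ z i) (hT : ∀ i j, 0 ≤ T i j) :
    ∑ j, |(z ᵥ* T) j| = ∑ i, z i * ∑ j, T i j := by
  simp only [abs_of_nonneg (vecMul_apply_nonneg hz hT _), mul_sum]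
  exact sum_comm

lemma sum_pos_of_ne_zero (hz : ∀ i, 0 ≤ z i) (hne : z ≠ 0) : 0 < ∑ i, z i :=
  Fintype.sum_pos (lt_of_le_of_ne hz hne.symm)

lemma log_normRatio_le_projDist {T : Matrix n n ℝ} (hT : ∀ i j, 0 ≤ T i j)
    (hz : ∀ i, 0 ≤ z i) (hw : ∀ i, 0 ≤ w i) (hsupp : z.support = w.support)
    (hzT : 0 < ∑ j, |(z ᵥ* T) j|) (hwT : 0 < ∑ j, |(w ᵥ* T) j|) :
    Real.log ((∑ j, |(z ᵥ* T) j|) / (∑ j, |(w ᵥ* T) j|) * ((∑ j, |w j|) / (∑ j, |z j|))) ≤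
      projDist z w := by
  have hz1 := sum_pos_of_ne_zero hz (by rintro rfl; simp at hzT)
  have hw1 := sum_pos_of_ne_zero hw (by rintro rfl; simp at hwT)
  simp only [abs_of_nonneg (hz _), abs_of_nonneg (hw _)]
  rw [sum_abs_vecMul hz hT] at hzT ⊢
  rw [sum_abs_vecMul hw hT] at hwT ⊢
  rw [projDist_eq_log_maxRatio, div_mul_div_comm]
  refine Real.log_le_log (by positivity) ?_
  rw [div_le_iff₀ (by positivity)]
  exact sum_mul_mul_sum_le_maxRatio hz hw hsupp fun i => sum_nonneg fun j _ => hT i j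

end Norms

section ProdSeq
variable {n : Type*} [Fintype n] [DecidableEq n] {M : ℕ → Matrix n n ℝ} {m : ℕ} {x y : n → ℝ}

lemma prodSeq_succ (M : ℕ → Matrix n n ℝ) (s : ℕ) :
    prodSeq M (s + 1) = prodSeq M s * M (s + 1) := by
  simp [prodSeq, List.range_succ]

lemma prodSeq_one (M : ℕ → Matrix n n ℝ) : prodSeq M 1 = M 1 := by
  simp [prodSeq]

lemma vecMul_prodSeq_succ (x : n → ℝ) (M : ℕ → Matrix n n ℝ) (s : ℕ) :
    x ᵥ* prodSeq M (s + 1) = x ᵥ* prodSeq M s ᵥ* M (s + 1) := by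
  rw [prodSeq_succ, vecMul_vecMul]

lemma prodSeq_nonneg (hMpos : ∀ ℓ, 1 ≤ ℓ → ℓ ≤ m → ∀ i j, 0 ≤ M ℓ i j) {s : ℕ} (hs : s ≤ m) :
    ∀ i j, 0 ≤ prodSeq M s i j := by
  induction s with
  | zero =>
    intro i j
    rw [prodSeq, List.range_zero, List.map_nil, List.prod_nil, Matrix.one_apply]
    split_ifs <;> norm_num
  | succ s ih =>
    intro i j
    rw [prodSeq_succ, Matrix.mul_apply]
    exact sum_nonneg fun k _ => mul_nonneg (ih (by omega) i k) (hMpos _ (by omega) hs k j)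

lemma vecMul_prodSeq_ne_zero_of_le {s t : ℕ} (hst : s ≤ t) (h : x ᵥ* prodSeq M t ≠ 0) :
    x ᵥ* prodSeq M s ≠ 0 := by
  induction t, hst using Nat.le_induction with
  | base => exact h
  | succ t _ ih => exact ih fun h0 => h (by rw [vecMul_prodSeq_succ, h0, zero_vecMul])

lemma support_vecMul_prodSeq_eq (hMpos : ∀ ℓ, 1 ≤ ℓ → ℓ ≤ m → ∀ i j, 0 ≤ M ℓ i j)
    (hMsr : ∀ ℓ, 1 ≤ ℓ → ℓ ≤ m → Subrectangular (M ℓ)) (hx : ∀ i, 0 ≤ x i) (hy : ∀ i, 0 ≤ y i)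
    (hxm : x ᵥ* prodSeq M m ≠ 0) (hym : y ᵥ* prodSeq M m ≠ 0) {s : ℕ} (hs1 : 1 ≤ s)
    (hsm : s ≤ m) : (x ᵥ* prodSeq M s).support = (y ᵥ* prodSeq M s).support := by
  obtain ⟨t, rfl⟩ : ∃ t, s = t + 1 := ⟨s - 1, by omega⟩
  have hxs := vecMul_prodSeq_ne_zero_of_le hsm hxm
  have hys := vecMul_prodSeq_ne_zero_of_le hsm hym
  rw [vecMul_prodSeq_succ] at hxs hys ⊢
  rw [vecMul_prodSeq_succ, support_vecMul_of_subrectangular (hMpos _ hs1 hsm) (hMsr _ hs1 hsm)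
      (vecMul_apply_nonneg hx (prodSeq_nonneg hMpos (by omega))) hxs,
    support_vecMul_of_subrectangular (hMpos _ hs1 hsm) (hMsr _ hs1 hsm)
      (vecMul_apply_nonneg hy (prodSeq_nonneg hMpos (by omega))) hys]

theorem projDist_vecMul_prodSeq_le (hMpos : ∀ ℓ, 1 ≤ ℓ → ℓ ≤ m → ∀ i j, 0 ≤ M ℓ i j)
    (hMsr : ∀ ℓ, 1 ≤ ℓ → ℓ ≤ m → Subrectangular (M ℓ)) (hx : ∀ i, 0 ≤ x i) (hy : ∀ i, 0 ≤ y i)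
    (hxm : x ᵥ* prodSeq M m ≠ 0) (hym : y ᵥ* prodSeq M m ≠ 0) {s : ℕ} (hs1 : 1 ≤ s)
    (hsm : s ≤ m) :
    projDist (x ᵥ* prodSeq M s) (y ᵥ* prodSeq M s) ≤
      projDist (x ᵥ* M 1) (y ᵥ* M 1) * ∏ ℓ ∈ Finset.Icc 2 s, tau (M ℓ) := by
  induction s, hs1 using Nat.le_induction with
  | base => simp [prodSeq_one]
  | succ s hs ih =>
    have hxs := vecMul_prodSeq_ne_zero_of_le hsm hxm
    rw [vecMul_prodSeq_succ] at hxs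
    calc projDist (x ᵥ* prodSeq M (s + 1)) (y ᵥ* prodSeq M (s + 1))
        ≤ tau (M (s + 1)) * projDist (x ᵥ* prodSeq M s) (y ᵥ* prodSeq M s) := by
          rw [vecMul_prodSeq_succ, vecMul_prodSeq_succ]
          exact projDist_vecMul_le_tau_mul (hMpos _ (by omega) hsm) (hMsr _ (by omega) hsm)
            (vecMul_apply_nonneg hx (prodSeq_nonneg hMpos (by omega)))
            (vecMul_apply_nonneg hy (prodSeq_nonneg hMpos (by omega)))
            (support_vecMul_prodSeq_eq hMpos hMsr hx hy hxm hym hs (by omega)) hxs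
      _ ≤ tau (M (s + 1)) * (projDist (x ᵥ* M 1) (y ᵥ* M 1) * ∏ ℓ ∈ Finset.Icc 2 s, tau (M ℓ)) :=
          mul_le_mul_of_nonneg_left (ih (by omega)) (tau_nonneg_s11 _)
      _ = projDist (x ᵥ* M 1) (y ᵥ* M 1) * ∏ ℓ ∈ Finset.Icc 2 (s + 1), tau (M ℓ) := by
          rw [prod_Icc_succ_top (by omega)]
          ring

end ProdSeq

theorem stmt_11_general {n : Type*} [Fintype n] [DecidableEq n]
    (m : ℕ) (hm : 1 ≤ m)
    (M : ℕ → Matrix n n ℝ) (T : Matrix n n ℝ)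
    (hMpos : ∀ ℓ, 1 ≤ ℓ → ℓ ≤ m → ∀ i j, 0 ≤ M ℓ i j)
    (hMsr : ∀ ℓ, 1 ≤ ℓ → ℓ ≤ m → Subrectangular (M ℓ))
    (hTpos : ∀ i j, 0 ≤ T i j)
    (x y : n → ℝ) (hx : ∀ i, 0 ≤ x i) (hy : ∀ i, 0 ≤ y i)
    (hx1 : 0 < ∑ j, |Matrix.vecMul x (prodSeq M m * T) j|)
    (hy1 : 0 < ∑ j, |Matrix.vecMul y (prodSeq M m * T) j|) :
    Real.log
        ((∑ j, |Matrix.vecMul x (prodSeq M m * T) j|) /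
            (∑ j, |Matrix.vecMul y (prodSeq M m * T) j|) *
          ((∑ j, |Matrix.vecMul y (prodSeq M m) j|) /
            (∑ j, |Matrix.vecMul x (prodSeq M m) j|))) ≤
      projDist (Matrix.vecMul x (M 1)) (Matrix.vecMul y (M 1)) *
        ∏ ℓ ∈ Finset.Icc 2 m, tau (M ℓ) := by
  simp only [← vecMul_vecMul] at hx1 hy1 ⊢
  have hxm : x ᵥ* prodSeq M m ≠ 0 := by intro h; simp [h] at hx1
  have hym : y ᵥ* prodSeq M m ≠ 0 := by intro h; simp [h] at hy1
  calc _ ≤ projDist (x ᵥ* prodSeq M m) (y ᵥ* prodSeq M m) :=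
        log_normRatio_le_projDist hTpos (vecMul_apply_nonneg hx (prodSeq_nonneg hMpos le_rfl))
          (vecMul_apply_nonneg hy (prodSeq_nonneg hMpos le_rfl))
          (support_vecMul_prodSeq_eq hMpos hMsr hx hy hxm hym hm le_rfl) hx1 hy1
    _ ≤ _ := projDist_vecMul_prodSeq_le hMpos hMsr hx hy hxm hym hm le_rfl

/-- (Proposition: generalized Hochwald–Jelenković inequality.) -/
theorem stmt_11 {n : Type*} [Fintype n] [DecidableEq n]
    (m : ℕ) (hm : 1 ≤ m)
    (M : ℕ → Matrix n n ℝ) (T : Matrix n n ℝ)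
    (hMpos : ∀ ℓ, 1 ≤ ℓ → ℓ ≤ m → ∀ i j, 0 ≤ M ℓ i j)
    (hMne : ∀ ℓ, 1 ≤ ℓ → ℓ ≤ m → M ℓ ≠ 0)
    (hMsr : ∀ ℓ, 1 ≤ ℓ → ℓ ≤ m → Subrectangular (M ℓ))
    (hTpos : ∀ i j, 0 ≤ T i j) (hTne : T ≠ 0)
    (x y : n → ℝ) (hx : ∀ i, 0 ≤ x i) (hy : ∀ i, 0 ≤ y i)
    (hxne : x ≠ 0) (hyne : y ≠ 0)
    (hx1 : 0 < ∑ j, |Matrix.vecMul x (prodSeq M m * T) j|)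
    (hy1 : 0 < ∑ j, |Matrix.vecMul y (prodSeq M m * T) j|) :
    Real.log
        ((∑ j, |Matrix.vecMul x (prodSeq M m * T) j|) /
            (∑ j, |Matrix.vecMul y (prodSeq M m * T) j|) *
          ((∑ j, |Matrix.vecMul y (prodSeq M m) j|) /
            (∑ j, |Matrix.vecMul x (prodSeq M m) j|))) ≤
      projDist (Matrix.vecMul x (M 1)) (Matrix.vecMul y (M 1)) *
        ∏ ℓ ∈ Finset.Icc 2 m, tau (M ℓ) :=
  stmt_11_general m hm M T hMpos hMsr hTpos x y hx hy hx1 hy1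
end
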